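/- Let p = 2q+1 with p, q prime, p ≥ 5. Let H = K/N where K = (Z/p)^p and N is the diagonal subgroup, with α the p-cycle permutation action and β a product of two disjoint q-cycles fixing 1, acting on H by permuting coordinates. Then |C_H(α)| + p·|C_H(β)| = p^3 + p < p^{p-1} = |H|; hence there exists h ∈ H fixed by no nontrivial element of the group ⟨α, β⟩ ≤ Sym_p acting on H. -/

import Mathlib

/-- Size of the conjugacy class of `x`. -/
noncomputable def convClassSize {G : Type*} [Group G] (x : G) : ℕ := Nat.card {y : G // IsConj x y}

/-- The set of conjugacy class sizes of `G`. -/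
def classSizes (G : Type*) [Group G] : Set ℕ := Set.range (fun x : G => convClassSize x)

/-- `K = (Z/p)^p`, written multiplicatively. -/
abbrev Kp (p : ℕ) := Fin p → Multiplicative (ZMod p)

/-- The diagonal subgroup `N = ⟨k₁k₂⋯k_p⟩`. -/
def Np (p : ℕ) : Subgroup (Kp p) :=
  Subgroup.zpowers (fun _ => Multiplicative.ofAdd (1 : ZMod p))

/-- `H = K/N`. -/
abbrev Hp (p : ℕ) := Kp p ⧸ Np p

/-- Coordinate permutation automorphism of `K`. -/
def permK (p : ℕ) (σ : Equiv.Perm (Fin p)) : Kp p ≃* Kp p where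
  toEquiv := Equiv.arrowCongr σ (Equiv.refl _)
  map_mul' _ _ := rfl

lemma permK_map_Np (p : ℕ) (σ : Equiv.Perm (Fin p)) :
    (Np p).map (permK p σ : Kp p →* Kp p) = Np p := by
  rw [Np, MonoidHom.map_zpowers]; rfl

/-- The induced automorphism of `H = K/N`. -/
def permH (p : ℕ) (σ : Equiv.Perm (Fin p)) : Hp p ≃* Hp p :=
  QuotientGroup.congr (Np p) (Np p) (permK p σ) (permK_map_Np p σ)

/-- The action of `Sym_p` on `H` as a homomorphism to `MulAut H`. -/
def permHhom (p : ℕ) : Equiv.Perm (Fin p) →* MulAut (Hp p) where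
  toFun σ := permH p σ
  map_one' := by
    ext x
    induction x using QuotientGroup.induction_on with
    | _ x => rfl
  map_mul' σ τ := by
    ext x
    induction x using QuotientGroup.induction_on with
    | _ x => rfl

/-- The subgroup `F = A ⋊ B = ⟨α, β⟩` of `Sym_p`. -/
abbrev Fsub (p : ℕ) (β : Equiv.Perm (Fin p)) : Subgroup (Equiv.Perm (Fin p)) :=
  Subgroup.closure {finRotate p, β}

/-- The group `G = H ⋊ (A ⋊ B)` of the main construction. -/
abbrev Ggrp (p : ℕ) (β : Equiv.Perm (Fin p)) :=
  Hp p ⋊[(permHhom p).comp (Fsub p β).subtype] Fsub p β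

/-- The group `P = H ⋊ A`. -/
abbrev Pgrp (p : ℕ) :=
  Hp p ⋊[(permHhom p).comp (Subgroup.zpowers (finRotate p)).subtype]
    Subgroup.zpowers (finRotate p)

lemma permHhom_mk (p : ℕ) (σ : Equiv.Perm (Fin p)) (k : Kp p) :
    permHhom p σ (QuotientGroup.mk k) = QuotientGroup.mk (permK p σ k) := rfl

lemma permK_apply (p : ℕ) (σ : Equiv.Perm (Fin p)) (k : Kp p) (i : Fin p) :
    permK p σ k i = k (σ.symm i) := rfl

/-- The set `T_σ ⊆ K` of lifts of fixed points. -/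
def Tset (p : ℕ) (σ : Equiv.Perm (Fin p)) : Set (Kp p) :=
  {k | (QuotientGroup.mk (permK p σ k) : Hp p) = QuotientGroup.mk k}

lemma val_cast_zmod (p : ℕ) [NeZero p] (c : ZMod p) : ((c.val : ℕ) : ZMod p) = c := by
  rw [ZMod.natCast_val, ZMod.cast_id]

lemma mem_Tset_iff (p : ℕ) [NeZero p] (σ : Equiv.Perm (Fin p)) (k : Kp p) :
    k ∈ Tset p σ ↔ ∃ c : ZMod p,
      ∀ i, Multiplicative.toAdd (k (σ i)) = Multiplicative.toAdd (k i) + c := by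
  rw [Tset, Set.mem_setOf_eq, eq_comm, QuotientGroup.eq]
  rw [Np, Subgroup.mem_zpowers_iff]
  constructor
  · rintro ⟨z, hz⟩
    refine ⟨-((z : ℤ) : ZMod p), fun i => ?_⟩
    have h1 := congrArg Multiplicative.toAdd (congrFun hz (σ i))
    have h2 : permK p σ k (σ i) = k i := by
      rw [permK_apply, Equiv.symm_apply_apply]
    rw [Pi.pow_apply, Pi.mul_apply, Pi.inv_apply, h2] at h1
    simp only [toAdd_zpow, toAdd_ofAdd, toAdd_mul, toAdd_inv, zsmul_eq_mul, mul_one] at h1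
    linear_combination h1
  · rintro ⟨c, hc⟩
    refine ⟨((-c).val : ℤ), ?_⟩
    funext i
    have h2 : permK p σ k i = k (σ.symm i) := rfl
    have h3 := hc (σ.symm i)
    rw [Equiv.apply_symm_apply] at h3
    rw [Pi.pow_apply, Pi.mul_apply, Pi.inv_apply, h2]
    apply Multiplicative.toAdd.injective
    simp only [toAdd_zpow, toAdd_ofAdd, toAdd_mul, toAdd_inv, zsmul_eq_mul, mul_one]
    push_cast
    rw [val_cast_zmod]
    linear_combination h3
lemma Np_mem_iff (p : ℕ) (x : Kp p) : x ∈ Np p ↔ (QuotientGroup.mk x : Hp p) = 1 :=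
  (QuotientGroup.eq_one_iff x).symm

lemma permK_mem_Np (p : ℕ) (σ : Equiv.Perm (Fin p)) (x : Kp p) (hx : x ∈ Np p) :
    permK p σ x ∈ Np p := by
  rw [← permK_map_Np p σ]
  exact ⟨x, hx, rfl⟩

/-- `T_σ` is in bijection with `Fix(σ) × N`. -/
noncomputable def fixProdEquiv (p : ℕ) (σ : Equiv.Perm (Fin p)) :
    {h : Hp p // permHhom p σ h = h} × (Np p) ≃ Tset p σ where
  toFun x := ⟨x.1.1.out * x.2.1, by
    have h1 : (QuotientGroup.mk x.1.1.out : Hp p) = x.1.1 := QuotientGroup.out_eq' _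
    have h2 : (QuotientGroup.mk x.2.1 : Hp p) = 1 := (Np_mem_iff p _).mp x.2.2
    have h3 : (QuotientGroup.mk (permK p σ x.2.1) : Hp p) = 1 :=
      (Np_mem_iff p _).mp (permK_mem_Np p σ _ x.2.2)
    show (QuotientGroup.mk (permK p σ (x.1.1.out * x.2.1)) : Hp p) = _
    rw [map_mul]
    rw [QuotientGroup.mk_mul, QuotientGroup.mk_mul, h2, h3, mul_one, mul_one, h1]
    have := x.1.2
    rw [← h1, permHhom_mk] at this
    rw [this, h1]⟩
  invFun t := (⟨QuotientGroup.mk t.1, by rw [permHhom_mk]; exact t.2⟩,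
    ⟨(QuotientGroup.mk t.1 : Hp p).out⁻¹ * t.1, by
      rw [Np_mem_iff, QuotientGroup.mk_mul, QuotientGroup.mk_inv, QuotientGroup.out_eq',
        inv_mul_cancel]⟩)
  left_inv := by
    rintro ⟨⟨h, hh⟩, ⟨n, hn⟩⟩
    have h1 : (QuotientGroup.mk h.out : Hp p) = h := QuotientGroup.out_eq' _
    have h2 : (QuotientGroup.mk n : Hp p) = 1 := (Np_mem_iff p _).mp hn
    have key : (QuotientGroup.mk (h.out * n) : Hp p) = h := by
      rw [QuotientGroup.mk_mul, h2, mul_one, h1]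
    refine Prod.ext (Subtype.ext ?_) (Subtype.ext ?_)
    · exact key
    · show (QuotientGroup.mk (h.out * n) : Hp p).out⁻¹ * (h.out * n) = n
      rw [key, inv_mul_cancel_left]
  right_inv := by
    rintro ⟨t, ht⟩
    refine Subtype.ext ?_
    show (QuotientGroup.mk t : Hp p).out * ((QuotientGroup.mk t : Hp p).out⁻¹ * t) = t
    rw [mul_inv_cancel_left]

lemma Np_card (p : ℕ) [Fact p.Prime] : Nat.card (Np p) = p := by
  rw [Np, Nat.card_zpowers]
  apply orderOf_eq_prime
  · funext i
    show Multiplicative.ofAdd (1 : ZMod p) ^ p = 1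
    have : ((p : ℕ) : ZMod p) = 0 := ZMod.natCast_self p
    apply Multiplicative.toAdd.injective
    simp only [toAdd_pow, toAdd_ofAdd, nsmul_eq_mul, mul_one, toAdd_one]
    exact this
  · intro hcon
    have := congrFun hcon ⟨0, (Fact.out : p.Prime).pos⟩
    have h2 : (1 : ZMod p) = 0 := congrArg Multiplicative.toAdd this
    exact one_ne_zero h2

lemma fix_card_mul (p : ℕ) [Fact p.Prime] (σ : Equiv.Perm (Fin p)) :
    Nat.card {h : Hp p // permHhom p σ h = h} * p = Nat.card (Tset p σ) := by
  rw [← Nat.card_congr (fixProdEquiv p σ), Nat.card_prod, Np_card]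
lemma finRotate_apply' (p : ℕ) [NeZero p] (i : Fin p) : finRotate p i = i + 1 := by
  obtain ⟨n, rfl⟩ : ∃ n, p = n + 1 := ⟨p - 1, (Nat.succ_pred_eq_of_pos (NeZero.pos p)).symm⟩
  exact finRotate_succ_apply i

lemma fin_val_one (p : ℕ) [NeZero p] (hp : 2 ≤ p) : ((1 : Fin p) : ℕ) = 1 := by
  rw [Fin.val_one']; exact Nat.mod_eq_of_lt hp

lemma castF_add_one (p : ℕ) [NeZero p] (i : Fin p) :
    (((i + 1 : Fin p) : ℕ) : ZMod p) = ((i : ℕ) : ZMod p) + 1 := by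
  rw [Fin.add_def]
  rw [ZMod.natCast_mod]
  push_cast
  rw [Fin.val_one', ZMod.natCast_mod]
  norm_num

open Fin.NatCast in
lemma Tset_alpha_spec (p : ℕ) [NeZero p] (k : Kp p) (c : ZMod p)
    (hstep : ∀ i : Fin p, Multiplicative.toAdd (k (i + 1)) = Multiplicative.toAdd (k i) + c) :
    ∀ i : Fin p, Multiplicative.toAdd (k i)
      = Multiplicative.toAdd (k 0) + ((i : ℕ) : ZMod p) * c := by
  have H : ∀ j : ℕ, Multiplicative.toAdd (k ((j : Fin p)))
      = Multiplicative.toAdd (k 0) + ((j : ℕ) : ZMod p) * c := by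
    intro j
    induction j with
    | zero => simp
    | succ j ih =>
      have : ((j + 1 : ℕ) : Fin p) = ((j : ℕ) : Fin p) + 1 := by push_cast; ring
      rw [this, hstep, ih]
      push_cast; ring
  intro i
  have := H i.val
  rwa [Fin.cast_val_eq_self] at this

noncomputable def TalphaEquiv (p : ℕ) [NeZero p] (hp : 2 ≤ p) :
    Tset p (finRotate p) ≃ ZMod p × ZMod p where
  toFun k := (Multiplicative.toAdd (k.1 0),
    Multiplicative.toAdd (k.1 1) - Multiplicative.toAdd (k.1 0))
  invFun x := ⟨fun i => Multiplicative.ofAdd (x.1 + ((i : ℕ) : ZMod p) * x.2), by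
    rw [mem_Tset_iff]
    refine ⟨x.2, fun i => ?_⟩
    rw [finRotate_apply']
    simp only [toAdd_ofAdd]
    rw [castF_add_one]
    ring⟩
  left_inv k := by
    obtain ⟨c, hc⟩ := (mem_Tset_iff p _ k.1).mp k.2
    have hstep : ∀ i : Fin p, Multiplicative.toAdd (k.1 (i + 1))
        = Multiplicative.toAdd (k.1 i) + c := by
      intro i; rw [← finRotate_apply']; exact hc i
    have hkey := Tset_alpha_spec p k.1 c hstep
    have hc1 : Multiplicative.toAdd (k.1 1) - Multiplicative.toAdd (k.1 0) = c := by
      rw [hkey 1, fin_val_one p hp]; push_cast; ring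
    refine Subtype.ext (funext fun i => ?_)
    show Multiplicative.ofAdd (Multiplicative.toAdd (k.1 0) + ((i : ℕ) : ZMod p) *
      (Multiplicative.toAdd (k.1 1) - Multiplicative.toAdd (k.1 0))) = k.1 i
    rw [hc1, ← hkey i, ofAdd_toAdd]
  right_inv x := by
    have h0 : ((0 : Fin p) : ℕ) = 0 := rfl
    ext
    · show Multiplicative.toAdd (Multiplicative.ofAdd (x.1 + ((0 : Fin p) : ℕ) * x.2)) = x.1
      rw [h0]; simp
    · show Multiplicative.toAdd (Multiplicative.ofAdd (x.1 + (((1 : Fin p) : ℕ) : ZMod p) * x.2))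
        - Multiplicative.toAdd (Multiplicative.ofAdd (x.1 + (((0 : Fin p) : ℕ) : ZMod p) * x.2)) = x.2
      rw [h0, fin_val_one p hp]; simp

lemma fix_alpha_card (p : ℕ) [Fact p.Prime] :
    Nat.card {h : Hp p // permHhom p (finRotate p) h = h} = p := by
  have hp2 : 2 ≤ p := (Fact.out : p.Prime).two_le
  haveI : NeZero p := ⟨by omega⟩
  have h1 := fix_card_mul p (finRotate p)
  rw [Nat.card_congr (TalphaEquiv p hp2), Nat.card_prod, Nat.card_zmod] at h1
  exact Nat.eq_of_mul_eq_mul_right (by omega) h1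
section beta

variable {p q : ℕ} {β : Equiv.Perm (Fin p)} {m n : Fin q → Fin p}

lemma succ_ne_self_fin [NeZero q] (hq2 : 2 ≤ q) (i : Fin q) : i + 1 ≠ i := by
  intro h
  have h1 : i + 1 = i + 0 := by rw [add_zero]; exact h
  have h2 : (1 : Fin q) = 0 := by exact add_left_cancel h1
  have := congrArg Fin.val h2
  rw [fin_val_one q hq2] at this
  simp at this

lemma m_ne_zero [NeZero p] [NeZero q] (hq2 : 2 ≤ q) (hm : Function.Injective m)
    (hβ0 : β 0 = 0) (hβm : ∀ i, β (m i) = m (i + 1)) (i : Fin q) : m i ≠ 0 := by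
  intro h
  have h1 : β (m i) = 0 := by rw [h, hβ0]
  rw [hβm] at h1
  exact succ_ne_self_fin hq2 i (hm (h1.trans h.symm))

open Fin.NatCast in
lemma const_on_cycle [NeZero p] [NeZero q] {k : Kp p} (hfix : ∀ x, k (β x) = k x)
    (hβm : ∀ i, β (m i) = m (i + 1)) (j : Fin q) : k (m j) = k (m 0) := by
  have H : ∀ j : ℕ, k (m ((j : Fin q))) = k (m 0) := by
    intro j
    induction j with
    | zero => simp
    | succ j ih =>
      have hc : ((j + 1 : ℕ) : Fin q) = ((j : ℕ) : Fin q) + 1 := by push_cast; ring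
      rw [hc, ← hβm, hfix, ih]
  have := H j.val
  rwa [Fin.cast_val_eq_self] at this

open Classical in
/-- `T_β` is in bijection with `(Z/p)³`. -/
noncomputable def TbetaEquiv [NeZero p] [NeZero q] (hq2 : 2 ≤ q)
    (hm : Function.Injective m) (hn : Function.Injective n)
    (hdisj : ∀ i j, m i ≠ n j)
    (hcover : ∀ x : Fin p, x ≠ 0 → (∃ i, m i = x) ∨ (∃ i, n i = x))
    (hβ0 : β 0 = 0) (hβm : ∀ i, β (m i) = m (i + 1)) (hβn : ∀ i, β (n i) = n (i + 1)) :
    Tset p β ≃ ZMod p × ZMod p × ZMod p where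
  toFun k := (Multiplicative.toAdd (k.1 0), Multiplicative.toAdd (k.1 (m 0)),
    Multiplicative.toAdd (k.1 (n 0)))
  invFun x := ⟨fun y => if y = 0 then Multiplicative.ofAdd x.1
      else if y ∈ Set.range m then Multiplicative.ofAdd x.2.1 else Multiplicative.ofAdd x.2.2, by
    rw [mem_Tset_iff]
    refine ⟨0, fun i => ?_⟩
    rw [add_zero]
    rcases eq_or_ne i 0 with rfl | hi
    · rw [hβ0]
    rcases hcover i hi with ⟨j, rfl⟩ | ⟨j, rfl⟩
    · rw [hβm]
      rw [if_neg (m_ne_zero hq2 hm hβ0 hβm _), if_neg (m_ne_zero hq2 hm hβ0 hβm _),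
        if_pos ⟨j + 1, rfl⟩, if_pos ⟨j, rfl⟩]
    · rw [hβn]
      have h1 : ¬ (n (j + 1) ∈ Set.range m) := by
        rintro ⟨t, ht⟩; exact hdisj t (j + 1) ht
      have h2 : ¬ (n j ∈ Set.range m) := by
        rintro ⟨t, ht⟩; exact hdisj t j ht
      rw [if_neg (m_ne_zero hq2 hn hβ0 hβn _), if_neg (m_ne_zero hq2 hn hβ0 hβn _),
        if_neg h1, if_neg h2]⟩
  left_inv k := by
    obtain ⟨c, hc⟩ := (mem_Tset_iff p _ k.1).mp k.2
    have hc0 : c = 0 := by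
      have := hc 0
      rw [hβ0, left_eq_add] at this
      exact this
    have hfix : ∀ x, k.1 (β x) = k.1 x := by
      intro x
      have := hc x
      rw [hc0, add_zero] at this
      exact Multiplicative.toAdd.injective this
    refine Subtype.ext (funext fun y => ?_)
    show (if y = 0 then Multiplicative.ofAdd (Multiplicative.toAdd (k.1 0))
      else if y ∈ Set.range m then Multiplicative.ofAdd (Multiplicative.toAdd (k.1 (m 0)))
      else Multiplicative.ofAdd (Multiplicative.toAdd (k.1 (n 0)))) = k.1 y
    rcases eq_or_ne y 0 with rfl | hy
    · rw [if_pos rfl, ofAdd_toAdd]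
    rw [if_neg hy]
    rcases hcover y hy with ⟨j, rfl⟩ | ⟨j, rfl⟩
    · rw [if_pos ⟨j, rfl⟩, ofAdd_toAdd, const_on_cycle hfix hβm j]
    · have h2 : ¬ (n j ∈ Set.range m) := by rintro ⟨t, ht⟩; exact hdisj t j ht
      rw [if_neg h2, ofAdd_toAdd, const_on_cycle hfix hβn j]
  right_inv x := by
    have hm0 : m 0 ≠ 0 := m_ne_zero hq2 hm hβ0 hβm 0
    have hn0 : n 0 ≠ 0 := m_ne_zero hq2 hn hβ0 hβn 0
    have hnr : ¬ (n 0 ∈ Set.range m) := by rintro ⟨t, ht⟩; exact hdisj t 0 ht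
    refine Prod.ext ?_ (Prod.ext ?_ ?_)
    · show Multiplicative.toAdd (if (0 : Fin p) = 0 then Multiplicative.ofAdd x.1
        else if (0 : Fin p) ∈ Set.range m then Multiplicative.ofAdd x.2.1
        else Multiplicative.ofAdd x.2.2) = x.1
      rw [if_pos rfl, toAdd_ofAdd]
    · show Multiplicative.toAdd (if m 0 = 0 then Multiplicative.ofAdd x.1
        else if m 0 ∈ Set.range m then Multiplicative.ofAdd x.2.1
        else Multiplicative.ofAdd x.2.2) = x.2.1
      rw [if_neg hm0, if_pos ⟨0, rfl⟩, toAdd_ofAdd]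
    · show Multiplicative.toAdd (if n 0 = 0 then Multiplicative.ofAdd x.1
        else if n 0 ∈ Set.range m then Multiplicative.ofAdd x.2.1
        else Multiplicative.ofAdd x.2.2) = x.2.2
      rw [if_neg hn0, if_neg hnr, toAdd_ofAdd]

lemma fix_beta_card [Fact p.Prime] [NeZero q] (hq2 : 2 ≤ q)
    (hm : Function.Injective m) (hn : Function.Injective n)
    (hdisj : ∀ i j, m i ≠ n j)
    (hcover : ∀ x : Fin p, x ≠ 0 → (∃ i, m i = x) ∨ (∃ i, n i = x))
    (hβ0 : β 0 = 0) (hβm : ∀ i, β (m i) = m (i + 1)) (hβn : ∀ i, β (n i) = n (i + 1)) :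
    Nat.card {h : Hp p // permHhom p β h = h} = p ^ 2 := by
  haveI : NeZero p := ⟨(Fact.out : p.Prime).pos.ne'⟩
  have h1 := fix_card_mul p β
  rw [Nat.card_congr (TbetaEquiv hq2 hm hn hdisj hcover hβ0 hβm hβn),
    Nat.card_prod, Nat.card_prod, Nat.card_zmod] at h1
  have : Nat.card {h : Hp p // permHhom p β h = h} * p = p ^ 2 * p := by
    rw [h1]; ring
  exact Nat.eq_of_mul_eq_mul_right (Fact.out : p.Prime).pos this

end beta
section struct

variable {p q r : ℕ} {β : Equiv.Perm (Fin p)} {m n : Fin q → Fin p}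

open Fin.NatCast in
lemma finRotate_pow_apply [NeZero p] (j : ℕ) (x : Fin p) :
    (finRotate p ^ j) x = x + (j : Fin p) := by
  induction j with
  | zero => simp
  | succ j ih =>
    rw [pow_succ', Equiv.Perm.mul_apply, ih, finRotate_apply', Nat.cast_add, Nat.cast_one,
      add_assoc]

lemma orderOf_finRotate' [Fact p.Prime] : orderOf (finRotate p) = p := by
  haveI : NeZero p := ⟨(Fact.out : p.Prime).pos.ne'⟩
  apply orderOf_eq_prime
  · refine Equiv.ext fun x => ?_
    rw [finRotate_pow_apply, Fin.natCast_self, add_zero, Equiv.Perm.one_apply]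
  · intro hcon
    have h1 := congrArg (fun (σ : Equiv.Perm (Fin p)) => σ 0) hcon
    simp only [Equiv.Perm.one_apply] at h1
    rw [finRotate_apply', zero_add] at h1
    have := congrArg Fin.val h1
    rw [fin_val_one p (Fact.out : p.Prime).two_le] at this
    simp at this

open Fin.NatCast in
lemma beta_pow_cyc [NeZero p] [NeZero q] (hβm : ∀ i, β (m i) = m (i + 1)) (j : ℕ) (i : Fin q) :
    (β ^ j) (m i) = m (i + (j : Fin q)) := by
  induction j with
  | zero => simp
  | succ j ih =>
    rw [pow_succ', Equiv.Perm.mul_apply, ih, hβm, Nat.cast_add, Nat.cast_one, add_assoc]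

lemma beta_pow_zero [NeZero p] (hβ0 : β 0 = 0) (j : ℕ) : (β ^ j) 0 = 0 := by
  induction j with
  | zero => rfl
  | succ j ih => rw [pow_succ, Equiv.Perm.mul_apply, hβ0, ih]

lemma beta_pow_q [NeZero p] [NeZero q]
    (hcover : ∀ x : Fin p, x ≠ 0 → (∃ i, m i = x) ∨ (∃ i, n i = x))
    (hβ0 : β 0 = 0) (hβm : ∀ i, β (m i) = m (i + 1)) (hβn : ∀ i, β (n i) = n (i + 1)) :
    β ^ q = 1 := by
  refine Equiv.ext fun x => ?_
  rw [Equiv.Perm.one_apply]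
  rcases eq_or_ne x 0 with rfl | hx
  · exact beta_pow_zero hβ0 q
  rcases hcover x hx with ⟨j, rfl⟩ | ⟨j, rfl⟩
  · rw [beta_pow_cyc hβm, Fin.natCast_self, add_zero]
  · rw [beta_pow_cyc hβn, Fin.natCast_self, add_zero]

lemma orderOf_beta [NeZero p] [Fact q.Prime]
    (hm : Function.Injective m)
    (hcover : ∀ x : Fin p, x ≠ 0 → (∃ i, m i = x) ∨ (∃ i, n i = x))
    (hβ0 : β 0 = 0) (hβm : ∀ i, β (m i) = m (i + 1)) (hβn : ∀ i, β (n i) = n (i + 1)) :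
    orderOf β = q := by
  haveI : NeZero q := ⟨(Fact.out : q.Prime).pos.ne'⟩
  apply orderOf_eq_prime
  · exact beta_pow_q hcover hβ0 hβm hβn
  · intro hcon
    have h1 : β (m 0) = m 0 := by rw [hcon, Equiv.Perm.one_apply]
    rw [hβm, zero_add] at h1
    have h2 := congrArg Fin.val (hm h1)
    rw [fin_val_one q (Fact.out : q.Prime).two_le] at h2
    simp at h2

lemma alpha_beta_swap (hβα : β⁻¹ * finRotate p * β = (finRotate p) ^ r) (c d : ℕ) :
    finRotate p ^ c * β ^ d = β ^ d * finRotate p ^ (c * r ^ d) := by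
  have base : finRotate p * β = β * finRotate p ^ r := by
    rw [← hβα]; group
  have swap1 : ∀ c : ℕ, finRotate p ^ c * β = β * finRotate p ^ (c * r) := by
    intro c
    induction c with
    | zero => simp
    | succ c ih =>
      calc finRotate p ^ (c + 1) * β = finRotate p ^ c * (finRotate p * β) := by
            rw [pow_succ, mul_assoc]
        _ = finRotate p ^ c * β * finRotate p ^ r := by rw [base, mul_assoc]
        _ = β * (finRotate p ^ (c * r) * finRotate p ^ r) := by rw [ih, mul_assoc]
        _ = β * finRotate p ^ ((c + 1) * r) := by rw [← pow_add]; ring_nf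
  induction d with
  | zero => simp
  | succ d ih =>
    calc finRotate p ^ c * β ^ (d + 1) = finRotate p ^ c * β ^ d * β := by
          rw [pow_succ, mul_assoc]
      _ = β ^ d * (finRotate p ^ (c * r ^ d) * β) := by rw [ih, mul_assoc]
      _ = β ^ d * (β * finRotate p ^ (c * r ^ d * r)) := by rw [swap1]
      _ = β ^ (d + 1) * finRotate p ^ (c * r ^ (d + 1)) := by
          rw [pow_succ, mul_assoc, pow_succ, ← mul_assoc]

lemma Fsub_decomp [Fact p.Prime] (hq1 : 1 ≤ q) (hβq : β ^ q = 1)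
    (hβα : β⁻¹ * finRotate p * β = (finRotate p) ^ r) {σ : Equiv.Perm (Fin p)}
    (hσ : σ ∈ Fsub p β) : ∃ b a : ℕ, σ = β ^ b * finRotate p ^ a := by
  have hαp : finRotate p ^ p = 1 := by
    have h := pow_orderOf_eq_one (finRotate p)
    rwa [orderOf_finRotate'] at h
  refine Subgroup.closure_induction ?_ ?_ ?_ ?_ hσ
  · rintro x (rfl | rfl)
    · exact ⟨0, 1, by simp⟩
    · exact ⟨1, 0, by simp⟩
  · exact ⟨0, 0, by simp⟩
  · rintro x y hx hy ⟨b, a, rfl⟩ ⟨d, c, rfl⟩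
    refine ⟨b + d, a * r ^ d + c, ?_⟩
    have h := alpha_beta_swap hβα a d
    calc β ^ b * finRotate p ^ a * (β ^ d * finRotate p ^ c)
        = β ^ b * (finRotate p ^ a * β ^ d) * finRotate p ^ c := by group
      _ = β ^ b * (β ^ d * finRotate p ^ (a * r ^ d)) * finRotate p ^ c := by rw [h]
      _ = β ^ (b + d) * finRotate p ^ (a * r ^ d + c) := by rw [pow_add, pow_add]; group
  · rintro x hx ⟨b, a, rfl⟩
    refine ⟨b * (q - 1), a * (p - 1) * r ^ (b * (q - 1)), ?_⟩
    have hp1 : 1 ≤ p := (Fact.out : p.Prime).pos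
    obtain ⟨t, rfl⟩ := Nat.exists_eq_add_of_le hp1
    obtain ⟨u, rfl⟩ := Nat.exists_eq_add_of_le hq1
    have hswap := alpha_beta_swap hβα (a * (1 + t - 1)) (b * (1 + u - 1))
    have hαa : finRotate (1 + t) ^ a * finRotate (1 + t) ^ (a * (1 + t - 1)) = 1 := by
      rw [← pow_add]
      have he : a + a * (1 + t - 1) = (1 + t) * a := by simp; ring
      rw [he, pow_mul, hαp, one_pow]
    have hβb : β ^ b * β ^ (b * (1 + u - 1)) = 1 := by
      rw [← pow_add]
      have he : b + b * (1 + u - 1) = (1 + u) * b := by simp; ring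
      rw [he, pow_mul, hβq, one_pow]
    apply inv_eq_of_mul_eq_one_right
    calc β ^ b * finRotate (1 + t) ^ a *
          (β ^ (b * (1 + u - 1)) * finRotate (1 + t) ^ (a * (1 + t - 1) * r ^ (b * (1 + u - 1))))
        = β ^ b * finRotate (1 + t) ^ a *
          (finRotate (1 + t) ^ (a * (1 + t - 1)) * β ^ (b * (1 + u - 1))) := by rw [hswap]
      _ = β ^ b * (finRotate (1 + t) ^ a * finRotate (1 + t) ^ (a * (1 + t - 1))) *
          β ^ (b * (1 + u - 1)) := by group
      _ = β ^ b * β ^ (b * (1 + u - 1)) := by rw [hαa, mul_one]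
      _ = 1 := hβb

end struct
section classify

variable {p q r : ℕ} {β : Equiv.Perm (Fin p)}

lemma fix_pow {σ : Equiv.Perm (Fin p)} {h : Hp p} (hfix : permHhom p σ h = h) (e : ℕ) :
    permHhom p (σ ^ e) h = h := by
  induction e with
  | zero => simp
  | succ e ih =>
    rw [pow_succ, map_mul, MulAut.mul_apply, hfix, ih]

lemma r_order [Fact p.Prime] [Fact q.Prime] (hr1 : 1 < r) (hr2 : r < q) (hqp : q < p)
    (hrq : r ^ q ≡ 1 [MOD p]) : orderOf ((r : ℕ) : ZMod p) = q := by
  apply orderOf_eq_prime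
  · have : ((r ^ q : ℕ) : ZMod p) = ((1 : ℕ) : ZMod p) :=
      (ZMod.natCast_eq_natCast_iff _ _ _).mpr hrq
    push_cast at this
    exact this
  · intro hcon
    rw [show (1 : ZMod p) = ((1 : ℕ) : ZMod p) by push_cast; rfl] at hcon
    rw [ZMod.natCast_eq_natCast_iff] at hcon
    have := Nat.ModEq.eq_of_lt_of_lt hcon (by omega) (by omega)
    omega

lemma classify [Fact p.Prime] [Fact q.Prime] (hqp : q < p)
    (hβq : β ^ q = 1) (hβord : orderOf β = q)
    (hβα : β⁻¹ * finRotate p * β = (finRotate p) ^ r)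
    (hr1 : 1 < r) (hr2 : r < q) (hrq : r ^ q ≡ 1 [MOD p])
    {σ : Equiv.Perm (Fin p)} (hσF : σ ∈ Fsub p β) (hσ1 : σ ≠ 1)
    {h : Hp p} (hfix : permHhom p σ h = h) :
    permHhom p (finRotate p) h = h ∨
    ∃ k : Fin p, ∃ h' : Hp p, permHhom p β h' = h' ∧ permHhom p (finRotate p ^ (k : ℕ)) h' = h := by
  haveI : NeZero p := ⟨(Fact.out : p.Prime).pos.ne'⟩
  have hq1 : 1 ≤ q := (Fact.out : q.Prime).pos
  obtain ⟨b, a, rfl⟩ := Fsub_decomp hq1 hβq hβα hσF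
  by_cases hb : q ∣ b
  · left
    have hβb : β ^ b = 1 := by
      obtain ⟨t, rfl⟩ := hb
      rw [pow_mul, hβq, one_pow]
    rw [hβb, one_mul] at hσ1 hfix
    have hpa : ¬ p ∣ a := by
      intro hd
      obtain ⟨t, rfl⟩ := hd
      apply hσ1
      rw [pow_mul]
      have hαp : finRotate p ^ p = 1 := by
        have h2 := pow_orderOf_eq_one (finRotate p)
        rwa [orderOf_finRotate'] at h2
      rw [hαp, one_pow]
    have ha0 : ((a : ℕ) : ZMod p) ≠ 0 := by
      rwa [Ne, ZMod.natCast_eq_zero_iff]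
    set e := (((a : ℕ) : ZMod p)⁻¹).val with he
    have key : finRotate p ^ (a * e) = finRotate p ^ 1 := by
      rw [pow_eq_pow_iff_modEq, orderOf_finRotate', ← ZMod.natCast_eq_natCast_iff]
      push_cast
      rw [he, val_cast_zmod]
      exact mul_inv_cancel₀ ha0
    have h2 := fix_pow hfix e
    rw [← pow_mul, key, pow_one] at h2
    exact h2
  · right
    have hrord : orderOf ((r : ℕ) : ZMod p) = q := r_order hr1 hr2 hqp hrq
    have hrb : ((r : ℕ) : ZMod p) ^ b ≠ 1 := by
      intro hcon
      exact hb (hrord ▸ orderOf_dvd_of_pow_eq_one hcon)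
    have hu : ((r : ℕ) : ZMod p) ^ b - 1 ≠ 0 := sub_ne_zero.mpr hrb
    set k := (((a : ℕ) : ZMod p) * (((r : ℕ) : ZMod p) ^ b - 1)⁻¹).val with hk
    have hkey : β ^ b * finRotate p ^ a * finRotate p ^ k = finRotate p ^ k * β ^ b := by
      rw [alpha_beta_swap hβα k b, mul_assoc, ← pow_add]
      congr 1
      rw [pow_eq_pow_iff_modEq, orderOf_finRotate', ← ZMod.natCast_eq_natCast_iff]
      push_cast
      rw [hk, val_cast_zmod]
      field_simp
      ring
    -- h' := φ((α^k)⁻¹) h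
    set φ := permHhom p with hφ
    set h' := φ (finRotate p ^ k)⁻¹ h with hh'
    have hcomm : β ^ b * (finRotate p ^ k)⁻¹ = (finRotate p ^ k)⁻¹ * (β ^ b * finRotate p ^ a) := by
      calc β ^ b * (finRotate p ^ k)⁻¹
          = (finRotate p ^ k)⁻¹ * (finRotate p ^ k * β ^ b) * (finRotate p ^ k)⁻¹ := by group
        _ = (finRotate p ^ k)⁻¹ * (β ^ b * finRotate p ^ a * finRotate p ^ k) *
            (finRotate p ^ k)⁻¹ := by rw [hkey]
        _ = (finRotate p ^ k)⁻¹ * (β ^ b * finRotate p ^ a) := by group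
    have hfixβ : φ (β ^ b) h' = h' := by
      rw [hh', ← MulAut.mul_apply, ← map_mul, hcomm, map_mul, MulAut.mul_apply, hfix]
    have hb0 : ((b : ℕ) : ZMod q) ≠ 0 := by
      rwa [Ne, ZMod.natCast_eq_zero_iff]
    set e' := (((b : ℕ) : ZMod q)⁻¹).val with he'
    have hββ : β ^ (b * e') = β ^ 1 := by
      rw [pow_eq_pow_iff_modEq, hβord, ← ZMod.natCast_eq_natCast_iff]
      push_cast
      rw [he', val_cast_zmod]
      exact mul_inv_cancel₀ hb0
    have hfixβ1 : φ β h' = h' := by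
      have h3 := fix_pow hfixβ e'
      rwa [← pow_mul, hββ, pow_one] at h3
    refine ⟨⟨k, ZMod.val_lt _⟩, h', hfixβ1, ?_⟩
    show φ (finRotate p ^ k) h' = h
    rw [hh', ← MulAut.mul_apply, ← map_mul, mul_inv_cancel, map_one, MulAut.one_apply]

end classify
lemma Hp_card (p : ℕ) [Fact p.Prime] : Nat.card (Hp p) = p ^ (p - 1) := by
  haveI : NeZero p := ⟨(Fact.out : p.Prime).pos.ne'⟩
  have h1 : Nat.card (Kp p) = p ^ p := by
    rw [Nat.card_fun]
    congr 1
    · exact (Nat.card_congr Multiplicative.toAdd).trans (Nat.card_zmod p)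
    · exact (Nat.card_eq_fintype_card).trans (Fintype.card_fin p)
  have h2 := Subgroup.card_eq_card_quotient_mul_card_subgroup (Np p)
  rw [Np_card, h1] at h2
  have h3 : p ^ (p - 1) * p = p ^ p := by
    rw [← pow_succ]
    congr 1
    have := (Fact.out : p.Prime).pos
    omega
  refine Nat.eq_of_mul_eq_mul_right (Fact.out : p.Prime).pos ?_
  rw [h3, ← h2]

theorem stmt_9 (p q : ℕ) [Fact p.Prime] [Fact q.Prime] (hpq : p = 2 * q + 1)
    (hp5 : 5 ≤ p)
    (β : Equiv.Perm (Fin p)) (m n : Fin q → Fin p)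
    (hm : Function.Injective m) (hn : Function.Injective n)
    (hdisj : ∀ i j, m i ≠ n j)
    (hcover : ∀ x : Fin p, x ≠ 0 → (∃ i, m i = x) ∨ (∃ i, n i = x))
    (hβ0 : β 0 = 0)
    (hβm : ∀ i, β (m i) = m (i + 1)) (hβn : ∀ i, β (n i) = n (i + 1))
    (r : ℕ) (hr1 : 1 < r) (hr2 : r < q) (hrq : r ^ q ≡ 1 [MOD p])
    (hβα : β⁻¹ * finRotate p * β = (finRotate p) ^ r)
    :
    Nat.card {h : Hp p // permHhom p (finRotate p) h = h}
        + p * Nat.card {h : Hp p // permHhom p β h = h} = p ^ 3 + p ∧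
      p ^ 3 + p < p ^ (p - 1) ∧ Nat.card (Hp p) = p ^ (p - 1) ∧
      ∃ h : Hp p, ∀ σ ∈ Fsub p β, σ ≠ 1 → permHhom p σ h ≠ h := by
  haveI : NeZero p := ⟨(Fact.out : p.Prime).pos.ne'⟩
  haveI : NeZero q := ⟨(Fact.out : q.Prime).pos.ne'⟩
  have hq2 : 2 ≤ q := (Fact.out : q.Prime).two_le
  have hqp : q < p := by omega
  have hβq : β ^ q = 1 := beta_pow_q hcover hβ0 hβm hβn
  have hβord : orderOf β = q := orderOf_beta hm hcover hβ0 hβm hβn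
  have hfixα := fix_alpha_card p
  have hfixβ := fix_beta_card hq2 hm hn hdisj hcover hβ0 hβm hβn
  have hcard1 : Nat.card {h : Hp p // permHhom p (finRotate p) h = h}
      + p * Nat.card {h : Hp p // permHhom p β h = h} = p ^ 3 + p := by
    rw [hfixα, hfixβ]; ring
  have hp3 : p ≤ p ^ 3 := Nat.le_self_pow (by norm_num) p
  have hlt : p ^ 3 + p < p ^ (p - 1) := by
    have h4 : p ^ 3 + p < p ^ 4 := by nlinarith [hp3, hp5]
    refine h4.trans_le (Nat.pow_le_pow_right (Fact.out : p.Prime).pos ?_)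
    omega
  refine ⟨hcard1, hlt, Hp_card p, ?_⟩
  by_contra hcon
  push_neg at hcon
  set f : ({h : Hp p // permHhom p (finRotate p) h = h}
      ⊕ Fin p × {h : Hp p // permHhom p β h = h}) → Hp p :=
    fun x => match x with
      | Sum.inl s => s.1
      | Sum.inr (k, s) => permHhom p (finRotate p ^ (k : ℕ)) s.1
    with hf
  have hsurj : Function.Surjective f := by
    intro h
    obtain ⟨σ, hσF, hσ1, hσfix⟩ := hcon h
    rcases classify hqp hβq hβord hβα hr1 hr2 hrq hσF hσ1 hσfix with hα | ⟨k, h', hb', heq⟩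
    · exact ⟨Sum.inl ⟨h, hα⟩, rfl⟩
    · exact ⟨Sum.inr (k, ⟨h', hb'⟩), heq⟩
  have hle := Nat.card_le_card_of_surjective f hsurj
  rw [Nat.card_sum, Nat.card_prod, Hp_card, hfixα, hfixβ] at hle
  have hfin : Nat.card (Fin p) = p := by
    rw [Nat.card_eq_fintype_card, Fintype.card_fin]
  rw [hfin] at hle
  -- p ^ (p-1) ≤ p + p * p^2
  have : p + p * p ^ 2 = p ^ 3 + p := by ring
  omega
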